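/- Let u, v, w be vertices of the set-graph G_{A^(n)} with n ≥ 2 such that deg(u) < deg(v) < deg(w). Then deg(u) + deg(v) > deg(w). -/

import Mathlib

/-!
Fix `a ∈ u`. Every subset containing `a` is `u` itself or a neighbour of `u`, so
`deg u + 1 ≥ 2 ^ (n - 1)`; since `deg u < deg v`, also `deg v ≥ 2 ^ (n - 1)`. Hence
`deg u + deg v + 1 ≥ 2 ^ n`, the number of vertices plus one, which exceeds `deg w + 1`.
-/

/-- The set-graph `G_{A^(n)}`: vertices are the nonempty subsets of an `n`-element set,
two distinct vertices being adjacent iff the corresponding subsets intersect. -/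
def setGraph (n : ℕ) : SimpleGraph {S : Finset (Fin n) // S.Nonempty} where
  Adj S T := S ≠ T ∧ (S.1 ∩ T.1).Nonempty
  symm := ⟨fun S T h => ⟨h.1.symm, by
    obtain ⟨_, h2⟩ := h
    rwa [Finset.inter_comm]⟩⟩
  loopless := ⟨fun S h => h.1 rfl⟩

instance (n : ℕ) : DecidableRel (setGraph n).Adj := fun S T =>
  inferInstanceAs (Decidable (S ≠ T ∧ (S.1 ∩ T.1).Nonempty))

open Finset

lemma card_filter_mem_univ_finset {α : Type*} [Fintype α] [DecidableEq α] (a : α) :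
    #{s : Finset α | a ∈ s} = 2 ^ (Fintype.card α - 1) := by
  rw [← card_univ, ← card_erase_of_mem (mem_univ a), ← card_powerset]
  refine card_nbij' (·.erase a) (insert a) (fun s _ => by simp) (fun s _ => by simp)
    (fun s hs => by simp_all)
    fun s hs => erase_insert fun h => by simpa using mem_powerset.1 hs h

lemma card_setGraph_verts_add_one (n : ℕ) :
    Fintype.card {S : Finset (Fin n) // S.Nonempty} + 1 = 2 ^ n := by
  have hempty : #{S : Finset (Fin n) | ¬S.Nonempty} = 1 := by
    simp [not_nonempty_iff_eq_empty, filter_eq']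
  rw [Fintype.card_subtype, ← hempty, card_filter_add_card_filter_not, card_univ,
    Fintype.card_finset, Fintype.card_fin]

lemma two_pow_le_setGraph_degree_add_one (n : ℕ) (u : {S : Finset (Fin n) // S.Nonempty}) :
    2 ^ (n - 1) ≤ (setGraph n).degree u + 1 := by
  obtain ⟨a, ha⟩ := u.2
  calc 2 ^ (n - 1) = #{S : Finset (Fin n) | a ∈ S} := by
        rw [card_filter_mem_univ_finset, Fintype.card_fin]
    _ = #(({S : Finset (Fin n) | a ∈ S} : Finset _).subtype Finset.Nonempty) := by
        rw [card_subtype, filter_filter]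
        exact congrArg card (filter_congr fun S _ => (and_iff_left_of_imp fun h => ⟨a, h⟩).symm)
    _ ≤ #(insert u ((setGraph n).neighborFinset u)) := by
        refine card_le_card fun T hT => ?_
        rw [mem_subtype, mem_filter] at hT
        rw [mem_insert, SimpleGraph.mem_neighborFinset]
        exact or_iff_not_imp_left.2 fun hTu => ⟨Ne.symm hTu, a, mem_inter.2 ⟨ha, hT.2⟩⟩
    _ ≤ (setGraph n).degree u + 1 := card_insert_le _ _

theorem stmt_5_general (n : ℕ) (u v w : {S : Finset (Fin n) // S.Nonempty})
    (h1 : (setGraph n).degree u < (setGraph n).degree v) :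
    (setGraph n).degree w < (setGraph n).degree u + (setGraph n).degree v := by
  have hu := two_pow_le_setGraph_degree_add_one n u
  have hw := (setGraph n).degree_lt_card_verts w
  have hcard := card_setGraph_verts_add_one n
  have hpow : 2 ^ n ≤ 2 * 2 ^ (n - 1) := by
    rw [← pow_succ']
    exact Nat.pow_le_pow_right two_pos (by omega)
  omega

theorem stmt_5 (n : ℕ) (hn : 2 ≤ n) (u v w : {S : Finset (Fin n) // S.Nonempty})
    (h1 : (setGraph n).degree u < (setGraph n).degree v)
    (h2 : (setGraph n).degree v < (setGraph n).degree w) :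
    (setGraph n).degree w < (setGraph n).degree u + (setGraph n).degree v :=
  stmt_5_general n u v w h1
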